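/- Let A be a C*-algebra and μ a bounded linear functional on A with polar decomposition μ = |μ|(· u) for a partial isometry u in the bidual A** (so |μ| is a positive functional with ‖|μ|‖ = ‖μ‖). Suppose (μ_n) is a sequence (or net) of such functionals with ‖μ_n‖ → 1 and μ_n(p_n) → 1 where p_n := u_n u_n* is the range projection of the polar partial isometry of μ_n. Then ‖μ_n − |μ_n|‖ → 0. -/

import Mathlib

/-!
Since `|μ|` is positive and `μ - |μ| = |μ|(· (u - 1))`, Cauchy–Schwarz for `|μ|` gives
`‖μ - |μ|‖² ≤ ‖μ‖ · |μ|((u - 1)⋆(u - 1))`. Expanding with `|μ| = μ(· u⋆)` and `u u⋆ u = u`,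
`|μ|((u - 1)⋆(u - 1)) = 2 Re μ(u⋆) - 2 Re μ(u u⋆) ≤ 2 (‖μ‖ - Re μ(p))`, which tends to `0`.
-/

open scoped ComplexOrder
open Filter Topology

section PositiveFunctional

variable {A F : Type*} [NonUnitalRing A] [StarRing A] [Module ℂ A] [IsScalarTower ℂ A A]
  [SMulCommClass ℂ A A] [StarModule ℂ A] [FunLike F A ℂ] [LinearMapClass F ℂ A ℂ] {ν : F}

theorem apply_star_mul_eq_conj (hν : ∀ x : A, 0 ≤ ν (star x * x)) (x y : A) :
    ν (star y * x) = starRingEnd ℂ (ν (star x * y)) := by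
  have him (a : A) : (ν (star a * a)).im = 0 := (Complex.nonneg_iff.1 (hν a)).2.symm
  -- polarization: `ν (star a * a)` is real for `a = x + y` and for `a = x + I • y`
  have hsum : (ν (star x * y)).im + (ν (star y * x)).im = 0 := by
    have h := him (x + y)
    simp only [star_add, add_mul, mul_add, map_add, Complex.add_im, him x, him y] at h
    linarith
  have hdiff : (ν (star x * y)).re - (ν (star y * x)).re = 0 := by
    have h := him (x + Complex.I • y)
    simp only [star_add, star_smul, add_mul, mul_add, smul_mul_assoc, mul_smul_comm, map_add,
      map_smul, smul_eq_mul, Complex.star_def, Complex.conj_I, Complex.add_im, Complex.mul_im,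
      Complex.mul_re, Complex.neg_re, Complex.neg_im, Complex.I_re, Complex.I_im, him x, him y] at h
    linarith
  apply Complex.ext <;> simp only [Complex.conj_re, Complex.conj_im] <;> linarith

variable (ν) in
abbrev positiveFunctionalCore (hν : ∀ x : A, 0 ≤ ν (star x * x)) :
    PreInnerProductSpace.Core ℂ A where
  inner x y := ν (star x * y)
  conj_inner_symm x y := (apply_star_mul_eq_conj hν y x).symm
  re_inner_nonneg x := (Complex.nonneg_iff.1 (hν x)).1
  add_left x y z := by simp only [star_add, add_mul, map_add]
  smul_left x y c := by simp only [star_smul, smul_mul_assoc, map_smul, smul_eq_mul]; rfl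

theorem norm_apply_star_mul_sq_le (hν : ∀ x : A, 0 ≤ ν (star x * x)) (x y : A) :
    ‖ν (star x * y)‖ ^ 2 ≤ (ν (star x * x)).re * (ν (star y * y)).re := by
  have h := @InnerProductSpace.Core.inner_mul_inner_self_le ℂ A _ _ _
    (positiveFunctionalCore ν hν) x y
  change ‖ν (star x * y)‖ * ‖ν (star y * x)‖ ≤ (ν (star x * x)).re * (ν (star y * y)).re at h
  rwa [apply_star_mul_eq_conj hν x y, Complex.norm_conj, ← sq] at h

end PositiveFunctional

theorem norm_le_one_of_mul_star_mul_self {E : Type*} [NonUnitalNormedRing E] [StarRing E]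
    [CStarRing E] {u : E} (hu : u * star u * u = u) : ‖u‖ ≤ 1 := by
  have hq : IsStarProjection (star u * u) :=
    ⟨by rw [IsIdempotentElem, mul_assoc, ← mul_assoc u, hu], .star_mul_self u⟩
  have h := hq.norm_le
  rw [CStarRing.norm_star_mul_self] at h
  nlinarith [norm_nonneg u]

section CStarRing

variable {A : Type*} [NormedRing A] [StarRing A] [CStarRing A] [NormedAlgebra ℂ A]
  [StarModule ℂ A] {μ ν : A →L[ℂ] ℂ} {u : A}

theorem norm_apply_mul_le (hν : ∀ x : A, 0 ≤ ν (star x * x)) (x a : A) :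
    ‖ν (x * a)‖ ≤ √(‖ν‖ * (ν (star a * a)).re) * ‖x‖ := by
  have hx : (ν (x * star x)).re ≤ ‖ν‖ * ‖x‖ ^ 2 :=
    calc (ν (x * star x)).re ≤ ‖ν (x * star x)‖ := Complex.re_le_norm _
      _ ≤ ‖ν‖ * ‖x * star x‖ := ν.le_opNorm _
      _ = ‖ν‖ * ‖x‖ ^ 2 := by rw [CStarRing.norm_self_mul_star, sq]
  have ha : 0 ≤ (ν (star a * a)).re := (Complex.nonneg_iff.1 (hν a)).1
  rw [← Real.sqrt_sq (norm_nonneg x), ← Real.sqrt_mul' _ (sq_nonneg _)]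
  apply Real.le_sqrt_of_sq_le
  calc ‖ν (x * a)‖ ^ 2 ≤ (ν (x * star x)).re * (ν (star a * a)).re := by
        simpa only [star_star] using norm_apply_star_mul_sq_le hν (star x) a
    _ ≤ ‖ν‖ * ‖x‖ ^ 2 * (ν (star a * a)).re := mul_le_mul_of_nonneg_right hx ha
    _ = ‖ν‖ * (ν (star a * a)).re * ‖x‖ ^ 2 := by ring

theorem norm_sub_le_of_apply_eq_apply_mul (hν : ∀ x : A, 0 ≤ ν (star x * x))
    (hpolar : ∀ x, μ x = ν (x * u)) :
    ‖μ - ν‖ ≤ √(‖ν‖ * (ν (star (u - 1) * (u - 1))).re) := by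
  refine ContinuousLinearMap.opNorm_le_bound _ (Real.sqrt_nonneg _) fun x => ?_
  rw [sub_apply, hpolar, ← map_sub, ← mul_sub_one]
  exact norm_apply_mul_le hν x (u - 1)

theorem re_apply_star_sub_one_mul_sub_one_le (hu : u * star u * u = u)
    (hν : ∀ x : A, 0 ≤ ν (star x * x)) (hpolar' : ∀ x, ν x = μ (x * star u)) :
    (ν (star (u - 1) * (u - 1))).re ≤ 2 * (‖μ‖ - (μ (u * star u)).re) := by
  have hexpand : star (u - 1) * (u - 1) = star u * u - star u - u + 1 := by
    simp only [star_sub, star_one]; noncomm_ring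
  have hq : star u * u * star u = star u := by
    simpa only [star_mul, star_star, mul_assoc] using congrArg star hu
  have hstar : ν (star u) = starRingEnd ℂ (ν u) := by
    simpa only [mul_one, star_one, one_mul] using apply_star_mul_eq_conj hν 1 u
  have hμ : (μ (star u)).re ≤ ‖μ‖ :=
    calc (μ (star u)).re ≤ ‖μ (star u)‖ := Complex.re_le_norm _
      _ ≤ ‖μ‖ * ‖star u‖ := μ.le_opNorm _
      _ ≤ ‖μ‖ := mul_le_of_le_one_right (norm_nonneg _)
          (by rw [norm_star]; exact norm_le_one_of_mul_star_mul_self hu)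
  rw [hexpand, map_add, map_sub, map_sub, hstar, hpolar' (star u * u), hq, hpolar' 1, one_mul,
    hpolar' u]
  simp only [Complex.add_re, Complex.sub_re, Complex.conj_re]
  linarith

end CStarRing

theorem polar_decomposition_absolute_value_limit_general
    {A : Type*} [NormedRing A] [StarRing A] [CStarRing A] [NormedAlgebra ℂ A]
    [StarModule ℂ A]
    (μ ν : ℕ → (A →L[ℂ] ℂ)) (u : ℕ → A)
    (hu : ∀ n, u n * star (u n) * u n = u n)
    (hνpos : ∀ n (x : A), 0 ≤ ν n (star x * x))
    (hnorm : ∀ n, ‖ν n‖ = ‖μ n‖)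
    (hpolar : ∀ n (x : A), μ n x = ν n (x * u n))
    (hpolar' : ∀ n (x : A), ν n x = μ n (x * star (u n)))
    (hμ1 : Tendsto (fun n => ‖μ n‖) atTop (nhds 1))
    (hp : Tendsto (fun n => μ n (u n * star (u n))) atTop (nhds 1)) :
    Tendsto (fun n => ‖μ n - ν n‖) atTop (nhds 0) := by
  set E : ℕ → ℝ := fun n => (ν n (star (u n - 1) * (u n - 1))).re
  have hE : Tendsto E atTop (𝓝 0) := by
    have hbound : Tendsto (fun n => 2 * (‖μ n‖ - (μ n (u n * star (u n))).re)) atTop (𝓝 0) := by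
      simpa using (hμ1.sub (Complex.continuous_re.tendsto 1 |>.comp hp)).const_mul 2
    exact tendsto_of_tendsto_of_tendsto_of_le_of_le tendsto_const_nhds hbound
      (fun n => (Complex.nonneg_iff.1 (hνpos n _)).1)
      (fun n => re_apply_star_sub_one_mul_sub_one_le (hu n) (hνpos n) (hpolar' n))
  have hsqrt : Tendsto (fun n => √(‖μ n‖ * E n)) atTop (𝓝 0) := by
    simpa using (hμ1.mul hE).sqrt
  refine squeeze_zero (fun n => norm_nonneg _) (fun n => ?_) hsqrt
  rw [← hnorm]
  exact norm_sub_le_of_apply_eq_apply_mul (hνpos n) (hpolar n)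

/-- Let `μ_n` be bounded functionals on a C*-algebra (playing the role of the enveloping
von Neumann algebra `A**`) with polar decompositions `μ_n = |μ_n|(· u_n)`,
`|μ_n| = μ_n(· u_n*)`, where `u_n` are partial isometries and `|μ_n| = ν_n` are positive
with `‖ν_n‖ = ‖μ_n‖`. If `‖μ_n‖ → 1` and `μ_n(p_n) → 1` where `p_n = u_n u_n*`, then
`‖μ_n − |μ_n|‖ → 0`. -/
theorem polar_decomposition_absolute_value_limit
    {A : Type*} [NormedRing A] [StarRing A] [CStarRing A] [NormedAlgebra ℂ A]
    [CompleteSpace A] [StarModule ℂ A]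
    (μ ν : ℕ → (A →L[ℂ] ℂ)) (u : ℕ → A)
    (hu : ∀ n, u n * star (u n) * u n = u n)
    (hνpos : ∀ n (x : A), 0 ≤ ν n (star x * x))
    (hnorm : ∀ n, ‖ν n‖ = ‖μ n‖)
    (hpolar : ∀ n (x : A), μ n x = ν n (x * u n))
    (hpolar' : ∀ n (x : A), ν n x = μ n (x * star (u n)))
    (hμ1 : Tendsto (fun n => ‖μ n‖) atTop (nhds 1))
    (hp : Tendsto (fun n => μ n (u n * star (u n))) atTop (nhds 1)) :
    Tendsto (fun n => ‖μ n - ν n‖) atTop (nhds 0) :=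
  polar_decomposition_absolute_value_limit_general μ ν u hu hνpos hnorm hpolar hpolar' hμ1 hp
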